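/- arXiv:2103.06868 — 3 statements merged into one kernel-verified Lean document; each statement's English description precedes it below -/
import Mathlib

section
/- Let L be an infinite field, let T be a non-discrete system of topologies over L, and let O be a nonempty T-open subset of L^m = 𝔸^m_L(L). Then O is Zariski dense in 𝔸^m_L. -/
open AlgebraicGeometry CategoryTheory Topology

universe u

noncomputable section

/-- `Spec` of a field `L`, as a scheme. -/
abbrev SpecF (L : Type u) [Field L] : Scheme.{u} := Spec (CommRingCat.of L)

/-- A morphism `f : X ⟶ Spec L` exhibits `X` as an `L`-variety if it is separated and of
finite type. -/
def IsVar {L : Type u} [Field L] {X : Scheme.{u}} (f : X ⟶ SpecF L) : Prop :=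
  IsSeparated f ∧ LocallyOfFiniteType f ∧ QuasiCompact f

/-- The set of `L`-rational points of a `K`-scheme `X` with structure morphism `f`,
relative to a field embedding `ι : K →+* L`; i.e. morphisms `Spec L ⟶ X` lying over
`Spec.map ι`. -/
def RatPts {K L : Type u} [Field K] [Field L] (ι : K →+* L) {X : Scheme.{u}}
    (f : X ⟶ SpecF K) : Set (SpecF L ⟶ X) :=
  {p | p ≫ f = Spec.map (CommRingCat.ofHom ι)}

/-- The map on rational points induced by a morphism `g : X ⟶ Y` over `Spec K`. -/
def ptsMap {K L : Type u} [Field K] [Field L] (ι : K →+* L) {X Y : Scheme.{u}}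
    {fX : X ⟶ SpecF K} {fY : Y ⟶ SpecF K} (g : X ⟶ Y) (hg : g ≫ fY = fX)
    (p : RatPts ι fX) : RatPts ι fY :=
  ⟨p.1 ≫ g, by
    show (p.1 ≫ g) ≫ fY = _
    rw [Category.assoc, hg]
    exact p.2⟩

/-- The image of a set of rational points in the underlying topological space of `X`
(`Spec L` has a unique point, namely `default`). -/
def ptsImage {K L : Type u} [Field K] [Field L] (ι : K →+* L) {X : Scheme.{u}}
    (f : X ⟶ SpecF K) (O : Set (RatPts ι f)) : Set X :=
  (fun p : RatPts ι f => p.1.base default) '' O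

/-- `X` is smooth over `L` at the point `x` if some open neighbourhood of `x` is smooth
over `L`. -/
def VarSmoothAt {L : Type u} [Field L] {X : Scheme.{u}} (f : X ⟶ SpecF L) (x : X) : Prop :=
  ∃ U : X.Opens, x ∈ U ∧ IsSmooth (U.ι ≫ f)

/-- A field `L` is large if every smooth `L`-curve with an `L`-rational point has
infinitely many `L`-rational points. -/
def IsLargeField (L : Type u) [Field L] : Prop :=
  ∀ (C : Scheme.{u}) (f : C ⟶ SpecF L), IsSmooth f → IsVar f →
    topologicalKrullDim C = 1 →
    (RatPts (RingHom.id L) f).Nonempty → (RatPts (RingHom.id L) f).Infinite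

/-- A system of topologies over `L`: a topology on `V(L)` for each `L`-variety `V` such
that induced maps on points are continuous, open immersions induce open topological
embeddings, and closed immersions induce closed topological embeddings. -/
structure SystemOfTopologies (L : Type u) [Field L] where
  top : ∀ {X : Scheme.{u}} (f : X ⟶ SpecF L), TopologicalSpace (RatPts (RingHom.id L) f)
  continuous_ptsMap : ∀ {X Y : Scheme.{u}} {fX : X ⟶ SpecF L} {fY : Y ⟶ SpecF L},
    IsVar fX → IsVar fY → ∀ (g : X ⟶ Y) (hg : g ≫ fY = fX),
      @Continuous _ _ (top fX) (top fY) (ptsMap (RingHom.id L) g hg)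
  isOpenEmbedding_ptsMap : ∀ {X Y : Scheme.{u}} {fX : X ⟶ SpecF L} {fY : Y ⟶ SpecF L},
    IsVar fX → IsVar fY → ∀ (g : X ⟶ Y) (hg : g ≫ fY = fX), IsOpenImmersion g →
      @Topology.IsOpenEmbedding _ _ (top fX) (top fY) (ptsMap (RingHom.id L) g hg)
  isClosedEmbedding_ptsMap : ∀ {X Y : Scheme.{u}} {fX : X ⟶ SpecF L} {fY : Y ⟶ SpecF L},
    IsVar fX → IsVar fY → ∀ (g : X ⟶ Y) (hg : g ≫ fY = fX), IsClosedImmersion g →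
      @Topology.IsClosedEmbedding _ _ (top fX) (top fY) (ptsMap (RingHom.id L) g hg)

/-- Affine `m`-space over `K`. -/
abbrev AffSp (K : Type u) [Field K] (m : ℕ) : Scheme.{u} :=
  Spec (CommRingCat.of (MvPolynomial (Fin m) K))

/-- The structure morphism of affine `m`-space over `K`. -/
def affStr (K : Type u) [Field K] (m : ℕ) : AffSp K m ⟶ SpecF K :=
  Spec.map (CommRingCat.ofHom MvPolynomial.C)

/-- The `L`-rational point of `𝔸ᵐ_K` with coordinates `a : Fin m → L`. -/
def affPt {K L : Type u} [Field K] [Field L] (ι : K →+* L) {m : ℕ} (a : Fin m → L) :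
    RatPts ι (affStr K m) :=
  ⟨Spec.map (CommRingCat.ofHom (MvPolynomial.eval₂Hom ι a)), by
    show Spec.map _ ≫ Spec.map _ = _
    rw [← Spec.map_comp]
    congr 1
    ext x
    exact MvPolynomial.eval₂Hom_C ι a x⟩

/-- A system of topologies is discrete if the topology on `L = 𝔸¹_L(L)` is discrete. -/
def SystemOfTopologies.Discrete {L : Type u} [Field L] (S : SystemOfTopologies L) : Prop :=
  S.top (affStr L 1) = ⊥

/-- The étale open topology on `V(L)`: generated by images of `L`-points of étale
morphisms of `L`-varieties `W ⟶ V`. -/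
def etaleOpenTop {L : Type u} [Field L] {X : Scheme.{u}} (f : X ⟶ SpecF L) :
    TopologicalSpace (RatPts (RingHom.id L) f) :=
  TopologicalSpace.generateFrom
    {O | ∃ (W : Scheme.{u}) (h : W ⟶ X), IsEtale h ∧ IsVar (h ≫ f) ∧
      O = Set.range (ptsMap (RingHom.id L) h rfl)}

/-- The inclusion `V(K) ⊆ V(L)` for a `K`-variety `V` and a field embedding `ι : K →+* L`. -/
def extendPt {K L : Type u} [Field K] [Field L] (ι : K →+* L) {X : Scheme.{u}}
    {f : X ⟶ SpecF K} (q : RatPts (RingHom.id K) f) : RatPts ι f :=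
  ⟨Spec.map (CommRingCat.ofHom ι) ≫ q.1, by
    have h2 := q.2
    show (Spec.map (CommRingCat.ofHom ι) ≫ q.1) ≫ f = _
    rw [Category.assoc, h2]
    show Spec.map _ ≫ Spec.map _ = _
    rw [← Spec.map_comp]
    congr 1⟩

/-- For an irreducible `K`-variety with structure morphism `f`, the canonical
`K`-algebra structure map `K →+* K(X)` into the function field. -/
def structToFunctionField {K : Type u} [Field K] {X : Scheme.{u}} [IrreducibleSpace X]
    (f : X ⟶ SpecF K) : K →+* X.functionField :=
  haveI : Nonempty X := IrreducibleSpace.toNonempty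
  haveI : Nonempty (⊤ : X.Opens) := ⟨⟨Classical.arbitrary X, trivial⟩⟩
  ((Scheme.ΓSpecIso (CommRingCat.of K)).inv ≫ f.appTop ≫ X.germToFunctionField ⊤ :
    CommRingCat.of K ⟶ X.functionField).hom

/-!
Rational points are closed in every `T`-topology, since a section of a separated morphism is a
closed immersion; so these topologies are T1. Translations of `𝔸¹` are continuous, hence if one
point of `L` is isolated then all are and `T` is discrete. Now suppose a nonzero polynomial `f`
vanishes on a nonempty open `O ⊆ Lᵐ`. Pulling `O` back along the line through a point of `O` and
a point where `f ≠ 0` gives a nonempty open subset of `L` on which a nonzero univariate polynomial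
vanishes; it is finite, so it has an isolated point. Hence `O` meets every basic open `D(f)`.
-/

section

open MvPolynomial

variable {L : Type u} [Field L] {m n : ℕ}

lemma specMap_ofHom_id : Spec.map (CommRingCat.ofHom (RingHom.id L)) = 𝟙 (SpecF L) :=
  Spec.map_id _

lemma isVar_id : IsVar (𝟙 (SpecF L)) :=
  ⟨inferInstance, inferInstance, inferInstance⟩

lemma isVar_affStr : IsVar (affStr L m) := by
  refine ⟨inferInstance, ?_, inferInstance⟩
  rw [affStr, HasRingHomProperty.Spec_iff (P := @LocallyOfFiniteType)]
  exact (RingHom.finiteType_algebraMap (A := L) (B := MvPolynomial (Fin m) L)).mpr inferInstance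

lemma isClosedImmersion_of_mem_ratPts {X : Scheme.{u}} {f : X ⟶ SpecF L} [IsSeparated f]
    {p : SpecF L ⟶ X} (hp : p ∈ RatPts (RingHom.id L) f) : IsClosedImmersion p := by
  have : IsClosedImmersion (p ≫ f) := by
    rw [show p ≫ f = 𝟙 _ from hp.trans specMap_ofHom_id]; infer_instance
  exact IsClosedImmersion.of_comp p f

lemma SystemOfTopologies.t1Space (S : SystemOfTopologies L) {X : Scheme.{u}}
    {f : X ⟶ SpecF L} (hf : IsVar f) : @T1Space _ (S.top f) := by
  let := S.top f
  refine ⟨fun p => ?_⟩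
  have hp : p.1 ≫ f = 𝟙 _ := p.2.trans specMap_ofHom_id
  have : IsSeparated f := hf.1
  have hce :=
    S.isClosedEmbedding_ptsMap isVar_id hf p.1 hp (isClosedImmersion_of_mem_ratPts p.2)
  convert hce.isClosed_range
  ext q
  refine ⟨fun hq => ⟨⟨𝟙 _, specMap_ofHom_id.symm⟩, Subtype.ext ?_⟩, ?_⟩
  · simp [ptsMap, Set.mem_singleton_iff.mp hq]
  · rintro ⟨r, rfl⟩
    have hr : r.1 = 𝟙 _ := by simpa using r.2.trans specMap_ofHom_id
    exact Subtype.ext (by simp [ptsMap, hr])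

lemma affPt_surjective : Function.Surjective (affPt (RingHom.id L) : (Fin m → L) → _) := by
  intro p
  obtain ⟨φ, hφ⟩ : ∃ φ, Spec.map φ = p.1 := ⟨Spec.preimage p.1, Spec.map_preimage _⟩
  have hφC : CommRingCat.ofHom C ≫ φ = CommRingCat.ofHom (RingHom.id L) :=
    Spec.map_injective (by rw [Spec.map_comp, hφ]; exact p.2)
  refine ⟨fun i => φ (X i), Subtype.ext ?_⟩
  rw [← hφ]
  refine congrArg Spec.map (CommRingCat.hom_ext (ringHom_ext (fun r => ?_) (fun i => ?_)))
  · simpa using (congrArg (fun ψ => ψ.hom r) hφC).symm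
  · simp

lemma affPt_injective : Function.Injective (affPt (RingHom.id L) : (Fin m → L) → _) := by
  intro a b hab
  funext i
  simpa using congrArg (fun ψ => ψ.hom (X i)) (Spec.map_injective (congrArg Subtype.val hab))

def affMap (σ : MvPolynomial (Fin m) L →ₐ[L] MvPolynomial (Fin n) L) :
    AffSp L n ⟶ AffSp L m :=
  Spec.map (CommRingCat.ofHom σ.toRingHom)

lemma affMap_comp_affStr (σ : MvPolynomial (Fin m) L →ₐ[L] MvPolynomial (Fin n) L) :
    affMap σ ≫ affStr L m = affStr L n := by
  rw [affMap, affStr, affStr, ← Spec.map_comp, ← CommRingCat.ofHom_comp]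
  congr 2
  exact σ.comp_algebraMap

lemma ptsMap_affMap_affPt (σ : MvPolynomial (Fin m) L →ₐ[L] MvPolynomial (Fin n) L)
    (b : Fin n → L) :
    ptsMap (RingHom.id L) (affMap σ) (affMap_comp_affStr σ) (affPt (RingHom.id L) b) =
      affPt (RingHom.id L) (fun i => aeval b (σ (X i))) := by
  refine Subtype.ext ?_
  show Spec.map _ ≫ Spec.map _ = Spec.map _
  rw [← Spec.map_comp, ← CommRingCat.ofHom_comp]
  congr 2
  have := algHom_ext (f := (aeval b).comp σ) (g := aeval fun i => aeval b (σ (X i))) (by simp)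
  exact congrArg AlgHom.toRingHom this

lemma SystemOfTopologies.continuous_ptsMap_affMap (S : SystemOfTopologies L)
    (σ : MvPolynomial (Fin m) L →ₐ[L] MvPolynomial (Fin n) L) :
    Continuous[S.top (affStr L n), S.top (affStr L m)]
      (ptsMap (RingHom.id L) (affMap σ) (affMap_comp_affStr σ)) :=
  S.continuous_ptsMap isVar_affStr isVar_affStr _ _

lemma SystemOfTopologies.isOpen_singleton_affPt (S : SystemOfTopologies L) {a : Fin m → L}
    (ha : IsOpen[S.top (affStr L m)] {affPt (RingHom.id L) a}) (b : Fin m → L) :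
    IsOpen[S.top (affStr L m)] {affPt (RingHom.id L) b} := by
  let translate : MvPolynomial (Fin m) L →ₐ[L] MvPolynomial (Fin m) L :=
    aeval fun i => X i + C (a i - b i)
  convert (S.continuous_ptsMap_affMap translate).isOpen_preimage _ ha
  ext p
  obtain ⟨c, rfl⟩ := affPt_surjective p
  simp only [Set.mem_singleton_iff, Set.mem_preimage, ptsMap_affMap_affPt,
    affPt_injective.eq_iff, translate, aeval_X, map_add, aeval_C, Algebra.algebraMap_self,
    RingHom.id_apply, funext_iff]
  exact forall_congr' fun i => ⟨fun h => by rw [h]; ring, fun h => by linear_combination h⟩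

lemma SystemOfTopologies.discrete_of_isOpen_finite (S : SystemOfTopologies L)
    {O : Set (RatPts (RingHom.id L) (affStr L 1))} (hO : IsOpen[S.top (affStr L 1)] O)
    (hfin : O.Finite) (hne : O.Nonempty) : S.Discrete := by
  let := S.top (affStr L 1)
  have := S.t1Space (isVar_affStr (m := 1))
  obtain ⟨p, hp⟩ := hne
  obtain ⟨a, rfl⟩ := affPt_surjective p
  have ha := isOpen_singleton_of_finite_mem_nhds _ (hO.mem_nhds hp) hfin
  refine eq_bot_of_singletons_open fun q => ?_
  obtain ⟨b, rfl⟩ := affPt_surjective q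
  exact S.isOpen_singleton_affPt ha b

lemma eval_aeval_line (a v : Fin m → L) (f : MvPolynomial (Fin m) L) (t : L) :
    (aeval (fun i => Polynomial.C (a i) + Polynomial.C (v i) * Polynomial.X) f).eval t =
      eval (fun i => a i + v i * t) f := by
  rw [← Polynomial.coe_aeval_eq_eval, ← AlgHom.comp_apply, comp_aeval, ← coe_aeval_eq_eval]
  simp

def affLine (a v : Fin m → L) : MvPolynomial (Fin m) L →ₐ[L] MvPolynomial (Fin 1) L :=
  aeval fun i => C (a i) + C (v i) * X 0

lemma ptsMap_affLine_affPt (a v : Fin m → L) (b : Fin 1 → L) :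
    ptsMap (RingHom.id L) (affMap (affLine a v)) (affMap_comp_affStr _) (affPt (RingHom.id L) b) =
      affPt (RingHom.id L) (fun i => a i + v i * b 0) := by
  rw [ptsMap_affMap_affPt]
  simp [affLine]

lemma SystemOfTopologies.exists_mem_eval_ne_zero [Infinite L] (S : SystemOfTopologies L)
    (hS : ¬ S.Discrete) {O : Set (RatPts (RingHom.id L) (affStr L m))}
    (hO : IsOpen[S.top (affStr L m)] O) {a : Fin m → L} (ha : affPt (RingHom.id L) a ∈ O)
    {f : MvPolynomial (Fin m) L} (hf : f ≠ 0) :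
    ∃ b, affPt (RingHom.id L) b ∈ O ∧ eval b f ≠ 0 := by
  let := S.top (affStr L 1)
  let := S.top (affStr L m)
  by_contra! hzero
  obtain ⟨v, hv⟩ : ∃ v : Fin m → L, eval (fun i => a i + v i * 1) f ≠ 0 := by
    by_contra! h
    exact hf (funext fun y => by simpa using h (y - a))
  let O' := ptsMap (RingHom.id L) (affMap (affLine a v)) (affMap_comp_affStr _) ⁻¹' O
  have hO' : IsOpen O' := (S.continuous_ptsMap_affMap _).isOpen_preimage _ hO
  have h0 : affPt (RingHom.id L) 0 ∈ O' := by simpa [O', ptsMap_affLine_affPt] using ha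
  let g : Polynomial L :=
    aeval (fun i => Polynomial.C (a i) + Polynomial.C (v i) * Polynomial.X) f
  have hg : g ≠ 0 := fun h => hv <| by
    rw [← eval_aeval_line]; exact (congrArg (Polynomial.eval 1) h).trans Polynomial.eval_zero
  have hroots :
      affPt (RingHom.id L) ⁻¹' O' ⊆ Equiv.funUnique (Fin 1) L ⁻¹' {t | g.IsRoot t} := by
    intro b hb
    rw [Set.mem_preimage, Set.mem_preimage, ptsMap_affLine_affPt] at hb
    simpa [g, eval_aeval_line] using hzero _ hb
  have hfin : O'.Finite := by
    rw [← Set.image_preimage_eq O' affPt_surjective]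
    exact (((Polynomial.finite_setOfPred_isRoot hg).preimage
      (Equiv.funUnique (Fin 1) L).injective.injOn).subset hroots).image _
  exact hS (S.discrete_of_isOpen_finite hO' hfin ⟨_, h0⟩)

lemma affPt_mem_basicOpen_iff (a : Fin m → L) (g : MvPolynomial (Fin m) L) (x : SpecF L) :
    (affPt (RingHom.id L) a).1.base x ∈ PrimeSpectrum.basicOpen g ↔ eval a g ≠ 0 := by
  let y : PrimeSpectrum L := x
  show g ∉ Ideal.comap (eval₂Hom (RingHom.id L) a) y.asIdeal ↔ _
  rw [Ideal.mem_comap, Ideal.eq_bot_of_prime y.asIdeal, Ideal.mem_bot]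
  rfl

end

/-- **Proposition A**. If `T` is a non-discrete system of topologies over an infinite
field `L` and `O` is a nonempty `T`-open subset of `L^m = 𝔸^m_L(L)`, then `O` is Zariski
dense in `𝔸^m_L`. -/
theorem propA (L : Type u) [Field L] [Infinite L] (S : SystemOfTopologies L)
    (hS : ¬ S.Discrete) (m : ℕ) (O : Set (RatPts (RingHom.id L) (affStr L m)))
    (hO : IsOpen[S.top (affStr L m)] O) (hne : O.Nonempty) :
    Dense (ptsImage (RingHom.id L) (affStr L m) O) := by
  obtain ⟨p, hp⟩ := hne
  obtain ⟨a, rfl⟩ := affPt_surjective p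
  refine (PrimeSpectrum.isTopologicalBasis_basic_opens
    (R := MvPolynomial (Fin m) L)).dense_iff.mpr ?_
  rintro _ ⟨g, rfl⟩ ⟨x, hx⟩
  have hg : g ≠ 0 := by rintro rfl; simp at hx
  obtain ⟨b, hbO, hb⟩ := S.exists_mem_eval_ne_zero hS hO hp hg
  exact ⟨_, (affPt_mem_basicOpen_iff b g _).mpr hb, affPt (RingHom.id L) b, hbO, rfl⟩
end
end

section
/- Let F be a field, let S be an F-vector space of dimension at least 2, let I be an index set, and for each i ∈ I let S_i be a one-dimensional F-subspace of S. If S = ⋃_{i ∈ I} S_i, then the cardinality of I is at least the cardinality of F. -/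
/-!
Pick linearly independent `x, y ∈ S`. Each line `S_i` contains at most one point of the affine
line `{x + a • y | a ∈ F}`: two such points would put `y`, and then `x`, into `S_i`. Since the
`S_i` cover `S`, choosing for each `a` an index `i` with `x + a • y ∈ S_i` injects `F` into `I`.
-/

universe u v w w'

open Cardinal

theorem Submodule.lift_mk_le_rank_of_linearIndependent {R : Type*} {M : Type w'} {ι : Type w}
    [Semiring R] [Nontrivial R] [AddCommMonoid M] [Module R M] {p : Submodule R M} {v : ι → M}
    (hv : LinearIndependent R v) (hvp : ∀ i, v i ∈ p) :
    lift.{w'} #ι ≤ lift.{w} (Module.rank R p) :=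
  (LinearIndependent.of_comp p.subtype (v := fun i => (⟨v i, hvp i⟩ : p)) hv).cardinal_lift_le_rank

theorem Submodule.subsingleton_setOf_add_smul_mem {K M : Type*} [DivisionRing K] [AddCommGroup M]
    [Module K M] {p : Submodule K M} (hp : Module.rank K p < 2) {x y : M}
    (hxy : LinearIndependent K ![x, y]) : {a : K | x + a • y ∈ p}.Subsingleton := by
  intro a ha b hb
  by_contra hab
  have hy : y ∈ p := by
    have hsub : (a - b) • y ∈ p := by
      simpa [sub_smul, add_sub_add_left_eq_sub] using p.sub_mem ha hb
    simpa [smul_smul, inv_mul_cancel₀ (sub_ne_zero.mpr hab)] using p.smul_mem (a - b)⁻¹ hsub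
  have hx : x ∈ p := by simpa using p.sub_mem ha (p.smul_mem a hy)
  have h2 : 2 ≤ Module.rank K p := by
    simpa using p.lift_mk_le_rank_of_linearIndependent hxy (Fin.forall_fin_two.mpr ⟨hx, hy⟩)
  exact hp.not_ge h2

/-- If an `F`-vector space `S` of dimension at least `2` is covered by a family of
one-dimensional subspaces `S_i` indexed by `I`, then `|I| ≥ |F|`. -/
theorem oneDimCover (F : Type u) [Field F] (S : Type u) [AddCommGroup S] [Module F S]
    (hS : 2 ≤ Module.rank F S) (I : Type v) (Si : I → Submodule F S)
    (hdim : ∀ i, Module.rank F (Si i) = 1)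
    (hcover : (⋃ i, (Si i : Set S)) = Set.univ) :
    Cardinal.lift.{v} (Cardinal.mk F) ≤ Cardinal.lift.{u} (Cardinal.mk I) := by
  obtain ⟨v, hv⟩ := exists_linearIndependent_of_le_rank (n := 2) (by exact_mod_cast hS)
  rw [← FinVec.etaExpand_eq v] at hv
  choose g hg using fun a : F => Set.iUnion_eq_univ_iff.mp hcover (v 0 + a • v 1)
  refine lift_mk_le'.mpr ⟨⟨g, fun a b hab => ?_⟩⟩
  exact (Si (g a)).subsingleton_setOf_add_smul_mem (by rw [hdim]; norm_num) hv (hg a) (hab ▸ hg b)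
end

section
/- Let L be an infinite field, let K be a proper subfield of L, and let X be a subset of L such that X·X^{-1} = { a/b : a ∈ X, b ∈ X, b ≠ 0 } equals L. Then the cardinality of X \ K equals the cardinality of L. -/
/-!
Write every `w ∈ L` as `num w / den w` with `num w, den w ∈ X`, and let `Y = X \ K`. Since
`L = X·X⁻¹`, `|L| ≤ |X|² ≤ (|Y| + |K|)²`, so it suffices to bound `|K|` in terms of `|Y|`.
Fix `t ∉ K`; the coset `t + K` misses `K`, so no `t + k` has both `num` and `den` in `K`.
On this coset, the `den` of an element with `num ∈ K` determines it, as does the `num` of an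
element with `den ∈ K`, and otherwise the pair `(num, den) ∈ Y × Y` does; hence
`|K| ≤ |Y| + |Y| + |Y|²`. If `|Y| < |L|`, all these bounds stay below the infinite `|L|`.
-/

open Cardinal Set

universe u

theorem mk_le_mk_mul_mk_of_forall_eq_div {α : Type u} [Div α] {X : Set α}
    (hX : ∀ w : α, ∃ a ∈ X, ∃ b ∈ X, w = a / b) : #α ≤ #X * #X := by
  have hsurj : Function.Surjective fun p : X × X => (p.1 : α) / p.2 := fun w => by
    obtain ⟨a, ha, b, hb, rfl⟩ := hX w
    exact ⟨(⟨a, ha⟩, ⟨b, hb⟩), rfl⟩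
  simpa [mk_prod] using mk_le_of_surjective hsurj

namespace Subfield

variable {L : Type u} [Field L] (K : Subfield L)

theorem eq_of_sub_mem_of_mul_mem {u v b : L} (hb : b ∉ K) (huv : u - v ∈ K)
    (hu : u * b ∈ K) (hv : v * b ∈ K) : u = v := by
  by_contra hne
  refine hb ?_
  have hb_eq : b = (u * b - v * b) / (u - v) := by
    rw [eq_div_iff (sub_ne_zero.mpr hne)]
    ring
  rw [hb_eq]
  exact K.div_mem (K.sub_mem hu hv) huv

theorem eq_of_sub_mem_of_mul_eq_mul {u v b b' : L} (hu : u ∉ K) (huv : u - v ∈ K)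
    (hb : b ∈ K) (hb' : b' ∈ K) (hb0 : b ≠ 0) (h : u * b = v * b') : u = v := by
  obtain rfl | hne := eq_or_ne b b'
  · exact mul_right_cancel₀ hb0 h
  · refine absurd ?_ hu
    have hu_eq : u = (u - v) * b' / (b' - b) := by
      rw [eq_div_iff (sub_ne_zero.mpr hne.symm)]
      linear_combination -h
    rw [hu_eq]
    exact K.div_mem (K.mul_mem huv hb') (K.sub_mem hb' hb)

theorem mk_le_of_forall_eq_div_of_sub_mem {X S : Set L}
    (hX : ∀ w : L, ∃ a ∈ X, ∃ b ∈ X, b ≠ 0 ∧ w = a / b)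
    (hSK : ∀ u ∈ S, u ∉ K) (hS : ∀ u ∈ S, ∀ v ∈ S, u - v ∈ K) :
    #S ≤ #↥(X \ K) + #↥(X \ K) + #↥(X \ K) * #↥(X \ K) := by
  choose num hnum den hden hden0 hdiv using hX
  have hmul (w : L) : w * den w = num w := (eq_div_iff (hden0 w)).mp (hdiv w)
  have hnum_or_den {u : L} (hu : u ∈ S) : num u ∉ K ∨ den u ∉ K := by
    by_contra! h
    exact hSK u hu (hdiv u ▸ K.div_mem h.1 h.2)
  let A : Set L := {u ∈ S | num u ∈ K}
  let B : Set L := {u ∈ S | den u ∈ K}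
  let C : Set L := {u ∈ S | num u ∉ K ∧ den u ∉ K}
  have hA : #A ≤ #↥(X \ K) := by
    have hmaps : MapsTo den A (X \ K) := fun u ⟨hu, hnumu⟩ =>
      ⟨hden u, (hnum_or_den hu).resolve_left (not_not.mpr hnumu)⟩
    refine mk_le_of_injective (hmaps.restrict_inj.mpr fun u hu v hv heq => ?_)
    exact K.eq_of_sub_mem_of_mul_mem (hmaps hu).2 (hS u hu.1 v hv.1) (hmul u ▸ hu.2)
      (by simpa only [heq, hmul] using hv.2)
  have hB : #B ≤ #↥(X \ K) := by
    have hmaps : MapsTo num B (X \ K) := fun u ⟨hu, hdenu⟩ =>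
      ⟨hnum u, (hnum_or_den hu).resolve_right (not_not.mpr hdenu)⟩
    refine mk_le_of_injective (hmaps.restrict_inj.mpr fun u hu v hv heq => ?_)
    exact K.eq_of_sub_mem_of_mul_eq_mul (hSK u hu.1) (hS u hu.1 v hv.1) hu.2 hv.2 (hden0 u)
      (by simpa only [hmul] using heq)
  have hC : #C ≤ #↥(X \ K) * #↥(X \ K) := by
    have hmaps : MapsTo (fun u => (num u, den u)) C ((X \ K) ×ˢ (X \ K)) :=
      fun u ⟨_, hnumu, hdenu⟩ => ⟨⟨hnum u, hnumu⟩, hden u, hdenu⟩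
    refine (mk_le_of_injective (hmaps.restrict_inj.mpr fun u _ v _ heq => ?_)).trans
      (mk_setProd _ _).le
    simp only [Prod.mk.injEq] at heq
    rw [hdiv u, hdiv v, heq.1, heq.2]
  have hcover : S ⊆ A ∪ B ∪ C := fun u hu => by
    by_cases hnumu : num u ∈ K
    · exact .inl (.inl ⟨hu, hnumu⟩)
    by_cases hdenu : den u ∈ K
    · exact .inl (.inr ⟨hu, hdenu⟩)
    exact .inr ⟨hu, hnumu, hdenu⟩
  calc #S ≤ #↥(A ∪ B ∪ C) := mk_le_mk_of_subset hcover
    _ ≤ #A + #B + #C := (mk_union_le _ _).trans (add_le_add (mk_union_le _ _) le_rfl)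
    _ ≤ _ := add_le_add (add_le_add hA hB) hC

theorem mk_le_of_forall_eq_div (hK : K ≠ ⊤) {X : Set L}
    (hX : ∀ w : L, ∃ a ∈ X, ∃ b ∈ X, b ≠ 0 ∧ w = a / b) :
    #K ≤ #↥(X \ K) + #↥(X \ K) + #↥(X \ K) * #↥(X \ K) := by
  obtain ⟨t, -, ht⟩ := SetLike.exists_of_lt (lt_top_iff_ne_top.mpr hK)
  have hcoset_disjoint : ∀ u ∈ (t + ·) '' K, u ∉ K := by
    rintro _ ⟨k, hk, rfl⟩
    exact (add_mem_cancel_right hk).not.mpr ht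
  have hcoset_sub : ∀ u ∈ (t + ·) '' K, ∀ v ∈ (t + ·) '' K, u - v ∈ K := by
    rintro _ ⟨k₁, hk₁, rfl⟩ _ ⟨k₂, hk₂, rfl⟩
    simpa using K.sub_mem hk₁ hk₂
  calc #K = #↥((t + ·) '' (K : Set L)) := (mk_image_eq (add_right_injective t)).symm
    _ ≤ _ := K.mk_le_of_forall_eq_div_of_sub_mem hX hcoset_disjoint hcoset_sub

end Subfield

/-- If `K` is a proper subfield of an infinite field `L` and `X ⊆ L` satisfies
`X·X⁻¹ = L`, then `|X \\ K| = |L|`. -/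
theorem largeDifference (L : Type u) [Field L] [Infinite L] (K : Subfield L) (hK : K ≠ ⊤)
    (X : Set L) (hX : {z : L | ∃ a ∈ X, ∃ b ∈ X, b ≠ 0 ∧ z = a / b} = Set.univ) :
    Cardinal.mk ↥(X \ ↑K) = Cardinal.mk L := by
  have hrep : ∀ w : L, ∃ a ∈ X, ∃ b ∈ X, b ≠ 0 ∧ w = a / b := eq_univ_iff_forall.mp hX
  refine le_antisymm (mk_set_le _) (not_lt.mp fun hlt => ?_)
  have hL : ℵ₀ ≤ #L := aleph0_le_mk L
  have hK_lt : #K < #L := (K.mk_le_of_forall_eq_div hK hrep).trans_lt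
    (add_lt_of_lt hL (add_lt_of_lt hL hlt hlt) (mul_lt_of_lt hL hlt hlt))
  have hX_lt : #X < #L := calc
    #X ≤ #↥(X \ K ∪ K) := mk_le_mk_of_subset (subset_union_left.trans sdiff_union_self.superset)
    _ ≤ #↥(X \ K) + #K := mk_union_le _ _
    _ < #L := add_lt_of_lt hL hlt hK_lt
  have hquot : ∀ w : L, ∃ a ∈ X, ∃ b ∈ X, w = a / b := fun w => by
    obtain ⟨a, ha, b, hb, -, rfl⟩ := hrep w
    exact ⟨a, ha, b, hb, rfl⟩
  exact (mk_le_mk_mul_mk_of_forall_eq_div hquot).not_gt (mul_lt_of_lt hL hX_lt hX_lt)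
end
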